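/- arXiv:1009.2175 — 3 statements merged into one kernel-verified Lean document; each statement's English description precedes it below -/
import Mathlib

section
/- For probability measures α and β on a measurable space with α absolutely continuous with respect to β, the relative entropy H(α|β) := ∫ (dα/dβ) log(dα/dβ) dβ satisfies the variational formula H(α|β) = sup over bounded measurable functions φ of (∫ φ dα − log ∫ e^φ dβ). -/
/-!
Upper bound: for bounded `φ`, Gibbs' inequality for `α` against the tilted measure
`β_φ = e^φ β / ∫ e^φ dβ` reads `0 ≤ H(α|β_φ) = H(α|β) - (∫ φ dα - log ∫ e^φ dβ)`.
Lower bound: equality would hold for the unbounded `φ = log (dα/dβ)`; the bounded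
`φₙ = log (clip of dα/dβ to [e^{-n}, e^n])` approach it, by dominated convergence for
`∫ φₙ dα` (dominated by `|log (dα/dβ)|`) and for `∫ e^{φₙ} dβ → 1` (dominated by `dα/dβ + 1`).
-/

open MeasureTheory Real Filter Topology InformationTheory

section DonskerVaradhan

variable {X : Type*} [MeasurableSpace X] {μ ν : Measure X} {φ : X → ℝ}

lemma integral_sub_log_integral_exp_le_integral_llr [IsProbabilityMeasure μ] [SigmaFinite ν]
    (hμν : μ ≪ ν) (h_int : Integrable (llr μ ν) μ) (hφμ : Integrable φ μ)
    (hφν : Integrable (fun x ↦ exp (φ x)) ν) :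
    ∫ x, φ x ∂μ - log (∫ x, exp (φ x) ∂ν) ≤ ∫ x, llr μ ν x ∂μ := by
  have : NeZero ν := ⟨fun h ↦ by simpa [h] using hμν (s := Set.univ)⟩
  have := isProbabilityMeasure_tilted hφν
  have h_gibbs := integral_llr_add_sub_measure_univ_nonneg
    (hμν.trans (absolutelyContinuous_tilted hφν)) (integrable_llr_tilted_right hμν hφμ h_int hφν)
  rw [integral_llr_tilted_right hμν hφμ hφν h_int] at h_gibbs
  simp only [probReal_univ] at h_gibbs
  linarith

end DonskerVaradhan

/-- Applied to the density `t = dα/dβ` rather than clamping `log t`: since `Real.log 0 = 0`,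
clamping the logarithm would give `exp φₙ = 1` instead of `→ 0` where the density vanishes. -/
noncomputable def clipExp (c t : ℝ) : ℝ := min (max t (exp (-c))) (exp c)

section ClipExp

variable {c t : ℝ}

lemma continuous_clipExp (c : ℝ) : Continuous (clipExp c) :=
  (continuous_id.max continuous_const).min continuous_const

lemma clipExp_pos : 0 < clipExp c t :=
  lt_min (lt_max_of_lt_right (exp_pos _)) (exp_pos _)

lemma log_clipExp (ht : 0 < t) : log (clipExp c t) = min (max (log t) (-c)) c := by
  rw [clipExp, ← exp_log ht, ← exp_monotone.map_max, ← exp_monotone.map_min, log_exp, log_exp]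

lemma abs_log_clipExp_le (hc : 0 ≤ c) : |log (clipExp c t)| ≤ c := by
  rw [abs_le, le_log_iff_exp_le clipExp_pos, log_le_iff_le_exp clipExp_pos]
  exact ⟨le_min (le_max_right _ _) (exp_le_exp.2 (by linarith)), min_le_right _ _⟩

lemma abs_log_clipExp_le_abs_log (hc : 0 ≤ c) (ht : 0 < t) : |log (clipExp c t)| ≤ |log t| := by
  have := abs_nonneg (log t)
  rw [log_clipExp ht, abs_le]
  exact ⟨le_min (le_max_of_le_left (neg_abs_le _)) (by linarith),
    (min_le_left _ _).trans (max_le (le_abs_self _) (by linarith))⟩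

lemma max_exp_neg_le_add_one (hc : 0 ≤ c) (ht : 0 ≤ t) : max t (exp (-c)) ≤ t + 1 :=
  max_le (by linarith) (by linarith [exp_le_one_iff.2 (neg_nonpos.2 hc)])

lemma clipExp_le_add_one (hc : 0 ≤ c) (ht : 0 ≤ t) : clipExp c t ≤ t + 1 :=
  (min_le_left _ _).trans (max_exp_neg_le_add_one hc ht)

lemma tendsto_clipExp (ht : 0 ≤ t) : Tendsto (fun n : ℕ ↦ clipExp n t) atTop (𝓝 t) := by
  have h_max : Tendsto (fun n : ℕ ↦ max t (exp (-n))) atTop (𝓝 t) := by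
    have := (tendsto_const_nhds (x := t)).max
      (tendsto_exp_atBot.comp (tendsto_neg_atTop_atBot.comp tendsto_natCast_atTop_atTop))
    rwa [max_eq_left ht] at this
  refine h_max.congr' ?_
  filter_upwards [(tendsto_exp_atTop.comp tendsto_natCast_atTop_atTop).eventually_ge_atTop (t + 1)]
    with n hn
  exact (min_eq_left ((max_exp_neg_le_add_one (Nat.cast_nonneg n) ht).trans hn)).symm

end ClipExp

section ClipExpIntegral

variable {X : Type*} [MeasurableSpace X] {μ ν : Measure X} {f : X → ℝ}

lemma tendsto_integral_clipExp [IsFiniteMeasure μ] (hf : Integrable f μ) (hf0 : 0 ≤ᵐ[μ] f) :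
    Tendsto (fun n : ℕ ↦ ∫ x, clipExp n (f x) ∂μ) atTop (𝓝 (∫ x, f x ∂μ)) := by
  refine tendsto_integral_of_dominated_convergence (fun x ↦ f x + 1)
    (fun n ↦ (continuous_clipExp n).comp_aestronglyMeasurable hf.1)
    (hf.add (integrable_const 1)) (fun n ↦ ?_) ?_
  · filter_upwards [hf0] with x hx
    rw [norm_of_nonneg clipExp_pos.le]
    exact clipExp_le_add_one (Nat.cast_nonneg n) hx
  · filter_upwards [hf0] with x hx
    exact tendsto_clipExp hx

lemma tendsto_integral_log_clipExp (hf : AEStronglyMeasurable f μ)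
    (hlog : Integrable (fun x ↦ log (f x)) μ) (hf0 : ∀ᵐ x ∂μ, 0 < f x) :
    Tendsto (fun n : ℕ ↦ ∫ x, log (clipExp n (f x)) ∂μ) atTop (𝓝 (∫ x, log (f x) ∂μ)) := by
  refine tendsto_integral_of_dominated_convergence (fun x ↦ |log (f x)|)
    (fun n ↦ ?_) hlog.abs (fun n ↦ ?_) ?_
  · exact ((continuous_clipExp n).log fun _ ↦ clipExp_pos.ne').comp_aestronglyMeasurable hf
  · filter_upwards [hf0] with x hx
    exact abs_log_clipExp_le_abs_log (Nat.cast_nonneg n) hx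
  · filter_upwards [hf0] with x hx
    exact (continuousAt_log hx.ne').tendsto.comp (tendsto_clipExp hx.le)

lemma tendsto_integral_log_clipExp_rnDeriv_sub [IsProbabilityMeasure μ] [IsFiniteMeasure ν]
    (hμν : μ ≪ ν) (h_int : Integrable (llr μ ν) μ) :
    Tendsto (fun n : ℕ ↦ ∫ x, log (clipExp n (μ.rnDeriv ν x).toReal) ∂μ
        - log (∫ x, clipExp n (μ.rnDeriv ν x).toReal ∂ν)) atTop (𝓝 (∫ x, llr μ ν x ∂μ)) := by
  have h_pos : ∀ᵐ x ∂μ, 0 < (μ.rnDeriv ν x).toReal := by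
    filter_upwards [Measure.rnDeriv_pos hμν, hμν.ae_le (Measure.rnDeriv_lt_top μ ν)] with x h0 htop
    exact ENNReal.toReal_pos h0.ne' htop.ne
  have h_log := tendsto_integral_log_clipExp
    (Measure.measurable_rnDeriv μ ν).ennreal_toReal.aestronglyMeasurable h_int h_pos
  have h_mass := tendsto_integral_clipExp (Measure.integrable_toReal_rnDeriv (μ := μ) (ν := ν))
    (ae_of_all _ fun _ ↦ ENNReal.toReal_nonneg)
  rw [Measure.integral_toReal_rnDeriv hμν, probReal_univ] at h_mass
  simpa [llr] using h_log.sub ((continuousAt_log one_ne_zero).tendsto.comp h_mass)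

end ClipExpIntegral

/-- The relative entropy `H(α|β) = ∫ (dα/dβ) log(dα/dβ) dβ` of probability measures
with `α ≪ β` equals the supremum over bounded measurable `φ` of
`∫ φ dα − log ∫ e^φ dβ`. -/
theorem relative_entropy_variational_formula
    {X : Type*} [MeasurableSpace X] (α β : Measure X)
    [IsProbabilityMeasure α] [IsProbabilityMeasure β]
    (hac : α ≪ β)
    (hint : Integrable
      (fun x => (α.rnDeriv β x).toReal * Real.log (α.rnDeriv β x).toReal) β) :
    ∫ x, (α.rnDeriv β x).toReal * Real.log (α.rnDeriv β x).toReal ∂β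
      = sSup {y : ℝ | ∃ φ : X → ℝ, Measurable φ ∧ (∃ C : ℝ, ∀ x, |φ x| ≤ C) ∧
          y = ∫ x, φ x ∂α - Real.log (∫ x, Real.exp (φ x) ∂β)} := by
  set S := {y : ℝ | ∃ φ : X → ℝ, Measurable φ ∧ (∃ C : ℝ, ∀ x, |φ x| ≤ C) ∧
    y = ∫ x, φ x ∂α - Real.log (∫ x, Real.exp (φ x) ∂β)}
  have h_int : Integrable (llr α β) α := (integrable_rnDeriv_mul_log_iff hac).1 hint
  have h_mem (n : ℕ) : ∫ x, log (clipExp n (α.rnDeriv β x).toReal) ∂α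
      - log (∫ x, clipExp n (α.rnDeriv β x).toReal ∂β) ∈ S :=
    ⟨fun x ↦ log (clipExp n (α.rnDeriv β x).toReal),
      ((continuous_clipExp n).measurable.comp (Measure.measurable_rnDeriv α β).ennreal_toReal).log,
      ⟨n, fun _ ↦ abs_log_clipExp_le n.cast_nonneg⟩, by simp only [exp_log clipExp_pos]⟩
  rw [integral_rnDeriv_mul_log hac]
  refine (IsLUB.csSup_eq (isLUB_of_mem_closure ?_ ?_) ⟨_, h_mem 0⟩).symm
  · rintro _ ⟨φ, hφ, ⟨C, hC⟩, rfl⟩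
    refine integral_sub_log_integral_exp_le_integral_llr hac h_int
      (.of_bound (μ := α) hφ.aestronglyMeasurable C (ae_of_all _ hC))
      (.of_bound hφ.exp.aestronglyMeasurable (exp C) (ae_of_all _ fun x ↦ ?_))
    rw [norm_of_nonneg (exp_pos _).le]
    exact exp_le_exp.2 (abs_le.1 (hC x)).2
  · exact mem_closure_of_tendsto (tendsto_integral_log_clipExp_rnDeriv_sub hac h_int)
      (Eventually.of_forall h_mem)
end

section
/- Let α, β be probability measures with α ≪ β and let A be a measurable set with β(A) > 0. Then α(A) ≤ (log 2 + H(α|β)) / log(1 + 1/β(A)). -/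
/-!
Tilting `β` by `exp f` and applying Gibbs' inequality to `α` against the tilted probability
measure gives the Donsker–Varadhan inequality `∫ f dα ≤ log ∫ exp f dβ + H(α|β)`.
For `f = σ 𝟙_A` with `σ = log (1 + 1/β(A))` the exponential moment is
`1 + (e^σ - 1) β(A) = 2`, and the left side is `σ α(A)`.
-/

open MeasureTheory Real

lemma exp_indicator_const {X : Type*} (A : Set X) (c : ℝ) :
    (fun x ↦ exp (A.indicator (fun _ ↦ c) x)) = fun x ↦ A.indicator (fun _ ↦ exp c - 1) x + 1 := by
  funext x
  by_cases hx : x ∈ A <;> simp [hx]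

namespace MeasureTheory

variable {X : Type*} [MeasurableSpace X]

lemma integral_llr_nonneg {μ ν : Measure X} [IsProbabilityMeasure μ] [IsProbabilityMeasure ν]
    (hμν : μ ≪ ν) (h_int : Integrable (llr μ ν) μ) :
    0 ≤ ∫ x, llr μ ν x ∂μ := by
  simpa using InformationTheory.integral_llr_add_sub_measure_univ_nonneg hμν h_int

lemma integral_le_log_integral_exp_add_integral_llr {μ ν : Measure X}
    [IsProbabilityMeasure μ] [SigmaFinite ν] (hμν : μ ≪ ν) {f : X → ℝ} (hfμ : Integrable f μ)
    (hfν : Integrable (fun x ↦ exp (f x)) ν) (h_int : Integrable (llr μ ν) μ) :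
    ∫ x, f x ∂μ ≤ log (∫ x, exp (f x) ∂ν) + ∫ x, llr μ ν x ∂μ := by
  have : NeZero ν := ⟨by rintro rfl; simpa using hμν (s := Set.univ) (by simp)⟩
  have : IsProbabilityMeasure (ν.tilted f) := isProbabilityMeasure_tilted hfν
  have h_gibbs := integral_llr_nonneg (hμν.trans (absolutelyContinuous_tilted hfν))
    (integrable_llr_tilted_right hμν hfμ h_int hfν)
  rw [integral_llr_tilted_right hμν hfμ hfν h_int] at h_gibbs
  linarith

lemma integrable_exp_indicator_const (μ : Measure X) [IsFiniteMeasure μ] {A : Set X}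
    (hA : MeasurableSet A) (c : ℝ) :
    Integrable (fun x ↦ exp (A.indicator (fun _ ↦ c) x)) μ := by
  rw [exp_indicator_const]
  exact ((integrable_const _).indicator hA).add (integrable_const 1)

lemma integral_exp_indicator_const (μ : Measure X) [IsProbabilityMeasure μ] {A : Set X}
    (hA : MeasurableSet A) (c : ℝ) :
    ∫ x, exp (A.indicator (fun _ ↦ c) x) ∂μ = 1 + (exp c - 1) * μ.real A := by
  rw [exp_indicator_const, integral_add ((integrable_const _).indicator hA) (integrable_const 1),
    integral_indicator_const _ hA]
  simp only [integral_const, probReal_univ, smul_eq_mul]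
  ring

end MeasureTheory

/-- For probability measures `α ≪ β` and a measurable set `A` with `β(A) > 0`,
`α(A) ≤ (log 2 + H(α|β)) / log(1 + 1/β(A))`, where
`H(α|β) = ∫ log(dα/dβ) dα` is the relative entropy. -/
theorem entropy_set_bound
    {X : Type*} [MeasurableSpace X] (α β : Measure X)
    [IsProbabilityMeasure α] [IsProbabilityMeasure β]
    (hac : α ≪ β)
    (hH : Integrable (MeasureTheory.llr α β) α)
    (A : Set X) (hA : MeasurableSet A) (hApos : 0 < (β A).toReal) :
    (α A).toReal
      ≤ (Real.log 2 + ∫ x, MeasureTheory.llr α β x ∂α)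
          / Real.log (1 + 1 / (β A).toReal) := by
  set σ := log (1 + 1 / (β A).toReal)
  have h_one_add_pos : 0 < 1 + 1 / (β A).toReal := by positivity
  have hσ_pos : 0 < σ := log_pos (by simp [hApos])
  set f := A.indicator fun _ ↦ σ
  have hf_exp : ∫ x, exp (f x) ∂β = 2 := by
    rw [integral_exp_indicator_const β hA, exp_log h_one_add_pos, measureReal_def]
    field_simp
    ring
  have hf_int : ∫ x, f x ∂α = σ * (α A).toReal := by
    rw [integral_indicator_const _ hA, smul_eq_mul, mul_comm, measureReal_def]
  have h_dv := integral_le_log_integral_exp_add_integral_llr hac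
    ((integrable_const σ).indicator hA) (integrable_exp_indicator_const β hA σ) hH
  rw [hf_exp, hf_int] at h_dv
  rw [le_div_iff₀ hσ_pos]
  linarith
end

section
/- Relative entropy is superadditive over product reference measures: if β = β₁ ⊗ β₂ is a product probability measure on X₁ × X₂ and α is a probability measure on X₁ × X₂ with marginals α₁, α₂, then H(α₁|β₁) + H(α₂|β₂) ≤ H(α|β). -/
open MeasureTheory
open scoped Classical

noncomputable section

/-- The relative entropy `H(α|β) = ∫ log(dα/dβ) dα` when `α ≪ β` and the
log-likelihood ratio is integrable, and `+∞` otherwise (`EReal`-valued). -/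
def relEntropy {X : Type*} [MeasurableSpace X] (α β : Measure X) : EReal :=
  if α ≪ β ∧ Integrable (MeasureTheory.llr α β) α then
    ((∫ x, MeasureTheory.llr α β x ∂α : ℝ) : EReal)
  else ⊤

/-! Disintegrate `α = α₁ ⊗ κ`. The chain rule for the Kullback–Leibler divergence gives
`H(α|β₁ ⊗ β₂) = H(α₁|β₁) + H(α|α₁ ⊗ β₂)`, and the data processing inequality along `Prod.snd`
bounds the last term below by `H(α₂|β₂)`. Between measures of equal mass, `relEntropy` is
Mathlib's `klDiv`, whose correction term `ν univ - μ univ` then vanishes. -/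

open InformationTheory ProbabilityTheory

lemma relEntropy_eq_klDiv {X : Type*} [MeasurableSpace X] {μ ν : Measure X}
    [IsFiniteMeasure μ] [IsFiniteMeasure ν] (h_univ : μ Set.univ = ν Set.univ) :
    relEntropy μ ν = klDiv μ ν := by
  by_cases h : μ ≪ ν ∧ Integrable (llr μ ν) μ
  · rw [relEntropy, if_pos h, ← toReal_klDiv_of_measure_eq h.1 h_univ,
      EReal.coe_ennreal_toReal (klDiv_ne_top h.1 h.2)]
  · rw [relEntropy, if_neg h, klDiv_eq_top_iff.mpr fun hac hint => h ⟨hac, hint⟩]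
    rfl

lemma klDiv_prod_eq_klDiv_fst_add {X₁ X₂ : Type*} [MeasurableSpace X₁] [MeasurableSpace X₂]
    [StandardBorelSpace X₂] [Nonempty X₂] (α : Measure (X₁ × X₂)) [IsFiniteMeasure α]
    (β₁ : Measure X₁) (β₂ : Measure X₂) [IsFiniteMeasure β₁] [IsProbabilityMeasure β₂] :
    klDiv α (β₁.prod β₂) = klDiv α.fst β₁ + klDiv α (α.fst.prod β₂) := by
  conv_lhs => rw [← α.disintegrate α.condKernel, ← Measure.compProd_const]
  rw [klDiv_compProd_eq_add, Measure.compProd_const, α.disintegrate α.condKernel]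

lemma klDiv_fst_add_klDiv_snd_le {X₁ X₂ : Type*} [MeasurableSpace X₁] [MeasurableSpace X₂]
    [StandardBorelSpace X₂] (α : Measure (X₁ × X₂)) [IsProbabilityMeasure α]
    (β₁ : Measure X₁) (β₂ : Measure X₂) [IsFiniteMeasure β₁] [IsProbabilityMeasure β₂] :
    klDiv α.fst β₁ + klDiv α.snd β₂ ≤ klDiv α (β₁.prod β₂) := by
  have : Nonempty X₂ := (nonempty_of_isProbabilityMeasure α).map Prod.snd
  rw [klDiv_prod_eq_klDiv_fst_add]
  refine add_le_add_right ?_ _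
  calc klDiv α.snd β₂ = klDiv α.snd (α.fst.prod β₂).snd := by rw [Measure.snd_prod]
    _ ≤ klDiv α (α.fst.prod β₂) := klDiv_map_le _ _ measurable_snd

theorem relEntropy_superadditive_general
    {X₁ X₂ : Type*} [MeasurableSpace X₁] [MeasurableSpace X₂]
    [StandardBorelSpace X₂]
    (α : Measure (X₁ × X₂)) [IsProbabilityMeasure α]
    (β₁ : Measure X₁) (β₂ : Measure X₂)
    [IsProbabilityMeasure β₁] [IsProbabilityMeasure β₂] :
    relEntropy (α.map Prod.fst) β₁ + relEntropy (α.map Prod.snd) β₂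
      ≤ relEntropy α (β₁.prod β₂) := by
  rw [← Measure.fst, ← Measure.snd, relEntropy_eq_klDiv (by simp), relEntropy_eq_klDiv (by simp),
    relEntropy_eq_klDiv (by simp), ← EReal.coe_ennreal_add, EReal.coe_ennreal_le_coe_ennreal_iff]
  exact klDiv_fst_add_klDiv_snd_le α β₁ β₂

/-- Superadditivity of relative entropy over product reference measures: if
`β = β₁ ⊗ β₂` and `α` has marginals `α₁, α₂`, then
`H(α₁|β₁) + H(α₂|β₂) ≤ H(α|β)`. -/
theorem relEntropy_superadditive
    {X₁ X₂ : Type*} [MeasurableSpace X₁] [MeasurableSpace X₂]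
    [StandardBorelSpace X₁] [StandardBorelSpace X₂]
    (α : Measure (X₁ × X₂)) [IsProbabilityMeasure α]
    (β₁ : Measure X₁) (β₂ : Measure X₂)
    [IsProbabilityMeasure β₁] [IsProbabilityMeasure β₂] :
    relEntropy (α.map Prod.fst) β₁ + relEntropy (α.map Prod.snd) β₂
      ≤ relEntropy α (β₁.prod β₂) :=
  relEntropy_superadditive_general α β₁ β₂

end
end
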